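/- arXiv:2409.07699 — 13 statements merged into one kernel-verified Lean document; each statement's English description precedes it below -/
import Mathlib

section
/- For all real numbers a, b, c, d, the ℝ-linear map P on H_ss determined on the basis by P(1) = a e₂ + c e₃, P(e₁) = b e₂ + d e₃, P(e₂) = 0, P(e₃) = 0 is a Rota-Baxter operator of weight 0 on H_ss. -/
noncomputable section

/-- The split semi-quaternion algebra `H_ss`, realized as the quaternion algebra over `ℝ`
with `e₁² = 1`, `e₂² = 0` (so that `e₃ = e₁e₂` satisfies `e₃² = 0`,
`e₁e₂ = e₃ = -e₂e₁`, `e₂e₃ = 0 = e₃e₂`, `e₃e₁ = -e₂ = -e₁e₃`). -/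
abbrev Hss : Type := QuaternionAlgebra ℝ 1 0 0

/-- The basis element `e₁`. -/
def e1 : Hss := ⟨0, 1, 0, 0⟩

/-- The basis element `e₂`. -/
def e2 : Hss := ⟨0, 0, 1, 0⟩

/-- The basis element `e₃`. -/
def e3 : Hss := ⟨0, 0, 0, 1⟩

/-- `P` is a Rota-Baxter operator of weight `l` on `H_ss`. -/
def IsRotaBaxter (l : ℝ) (P : Hss →ₗ[ℝ] Hss) : Prop :=
  ∀ x y : Hss, P x * P y = P (P x * y) + P (x * P y) + l • P (x * y)

/-!
Every such `P` takes values in `N = span {e₂, e₃}`, a two-sided ideal of `H_ss` with `N * N = 0`,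
and `P` vanishes on `N`. So `P x * P y ∈ N * N = 0`, and `P x * y`, `x * P y` lie in `N ⊆ ker P`:
all three terms of the weight-zero Rota-Baxter identity vanish.
-/

theorem rotaBaxter_weight_zero_of_squareZero_ideal {R A : Type*} [Semiring R] [Ring A]
    [Module R A] (P : A →ₗ[R] A) (I : TwoSidedIdeal A) (hrange : ∀ x, P x ∈ I)
    (hker : ∀ x ∈ I, P x = 0) (hsq : ∀ x ∈ I, ∀ y ∈ I, x * y = 0) (x y : A) :
    P x * P y = P (P x * y) + P (x * P y) := by
  rw [hsq _ (hrange x) _ (hrange y), hker _ (I.mul_mem_right _ _ (hrange x)),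
    hker _ (I.mul_mem_left _ _ (hrange y)), add_zero]

namespace Hss

def squareZeroIdeal : TwoSidedIdeal Hss :=
  TwoSidedIdeal.mk' {x | x.re = 0 ∧ x.imI = 0}
    (by simp)
    (fun ⟨hx₀, hx₁⟩ ⟨hy₀, hy₁⟩ => by simp [hx₀, hx₁, hy₀, hy₁])
    (fun ⟨hx₀, hx₁⟩ => by simp [hx₀, hx₁])
    (fun ⟨hy₀, hy₁⟩ => by simp [hy₀, hy₁])
    (fun ⟨hx₀, hx₁⟩ => by simp [hx₀, hx₁])

theorem mem_squareZeroIdeal {x : Hss} : x ∈ squareZeroIdeal ↔ x.re = 0 ∧ x.imI = 0 :=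
  TwoSidedIdeal.mem_mk' _ _ _ _ _ _ x

theorem mul_eq_zero_of_mem_squareZeroIdeal (x : Hss) (hx : x ∈ squareZeroIdeal) (y : Hss)
    (hy : y ∈ squareZeroIdeal) : x * y = 0 := by
  rw [mem_squareZeroIdeal] at hx hy
  ext <;> simp [QuaternionAlgebra.imJ_mul,
    QuaternionAlgebra.imK_mul, hx.1, hx.2, hy.1, hy.2]

theorem smul_e2_add_smul_e3_mem_squareZeroIdeal (a c : ℝ) : a • e2 + c • e3 ∈ squareZeroIdeal :=
  mem_squareZeroIdeal.2 ⟨by simp [e2, e3], by simp [e2, e3]⟩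

theorem eq_sum_basis (x : Hss) : x = x.re • 1 + x.imI • e1 + x.imJ • e2 + x.imK • e3 := by
  ext <;> simp [e1, e2, e3]

variable (P : Hss →ₗ[ℝ] Hss) (h2 : P e2 = 0) (h3 : P e3 = 0)
include h2 h3

theorem map_eq_zero_of_mem_squareZeroIdeal {x : Hss} (hx : x ∈ squareZeroIdeal) : P x = 0 := by
  obtain ⟨hre, himI⟩ := mem_squareZeroIdeal.1 hx
  rw [eq_sum_basis x, hre, himI]
  simp [h2, h3]

theorem map_mem_squareZeroIdeal (h0 : P 1 ∈ squareZeroIdeal) (h1 : P e1 ∈ squareZeroIdeal)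
    (x : Hss) : P x ∈ squareZeroIdeal := by
  rw [eq_sum_basis x]
  simp only [map_add, map_smul, h2, h3, smul_zero, add_zero]
  rw [mem_squareZeroIdeal] at h0 h1 ⊢
  simp [h0, h1]

end Hss

theorem rb_w0_family1 (a b c d : ℝ)
    (P : Hss →ₗ[ℝ] Hss)
    (h0 : P 1 = (a) • e2 + (c) • e3)
    (h1 : P e1 = (b) • e2 + (d) • e3)
    (h2 : P e2 = 0)
    (h3 : P e3 = 0) :
    IsRotaBaxter 0 P := by
  have hrange := Hss.map_mem_squareZeroIdeal P h2 h3
    (h0 ▸ Hss.smul_e2_add_smul_e3_mem_squareZeroIdeal a c)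
    (h1 ▸ Hss.smul_e2_add_smul_e3_mem_squareZeroIdeal b d)
  intro x y
  rw [zero_smul, add_zero]
  exact rotaBaxter_weight_zero_of_squareZero_ideal P _ hrange
    (fun _ => Hss.map_eq_zero_of_mem_squareZeroIdeal P h2 h3)
    Hss.mul_eq_zero_of_mem_squareZeroIdeal x y
end
end

section
/- For all real numbers a, b, c, the ℝ-linear map P on H_ss determined on the basis by P(1) = a(e₂ + e₃), P(e₁) = b(e₂ + e₃), P(e₂) = c(e₂ + e₃), P(e₃) = −c(e₂ + e₃) is a Rota-Baxter operator of weight 0 on H_ss. -/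
/-! `P` has rank one: `P x = φ x • u` with `u = e₂ + e₃` and `φ x = a x₀ + b x₁ + c x₂ - c x₃`.
The line `ℝ u` is a two-sided ideal with `u² = 0` contained in `ker φ`, so both sides of the
Rota-Baxter identity of weight `0` vanish. -/

noncomputable section

theorem LinearMap.smulRight_rotaBaxter_zero {R A : Type*} [CommSemiring R] [Semiring A]
    [Algebra R A] (φ : A →ₗ[R] R) {u : A} (hu : u * u = 0) (hφu : φ u = 0)
    (hleft : ∀ x, x * u ∈ R ∙ u) (hright : ∀ y, u * y ∈ R ∙ u) (x y : A) :
    φ.smulRight u x * φ.smulRight u y =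
      φ.smulRight u (φ.smulRight u x * y) + φ.smulRight u (x * φ.smulRight u y) := by
  have hker : ∀ z ∈ R ∙ u, φ z = 0 := by
    intro z hz
    obtain ⟨r, rfl⟩ := Submodule.mem_span_singleton.mp hz
    rw [map_smul, hφu, smul_zero]
  simp only [smulRight_apply, hu, smul_mul_assoc, mul_smul_comm, map_smul,
    hker _ (hleft x), hker _ (hright y), smul_zero, zero_smul, add_zero]

theorem e2_add_e3_mul_self : (e2 + e3) * (e2 + e3) = 0 := by
  ext <;> simp [e2, e3]

theorem mul_e2_add_e3 (x : Hss) : x * (e2 + e3) = (x.re + x.imI) • (e2 + e3) := by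
  ext <;> simp [e2, e3]

theorem e2_add_e3_mul (y : Hss) : (e2 + e3) * y = (y.re - y.imI) • (e2 + e3) := by
  ext <;> simp [e2, e3, sub_eq_add_neg, add_comm]

theorem coe_basisOneIJK_Hss :
    ⇑(QuaternionAlgebra.basisOneIJK 1 0 0 : Module.Basis (Fin 4) ℝ Hss) = ![1, e1, e2, e3] := by
  funext i
  fin_cases i <;> ext <;> simp [QuaternionAlgebra.basisOneIJK, e1, e2, e3]

theorem rb_w0_family2 (a b c : ℝ)
    (P : Hss →ₗ[ℝ] Hss)
    (h0 : P 1 = (a) • (e2 + e3))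
    (h1 : P e1 = (b) • (e2 + e3))
    (h2 : P e2 = (c) • (e2 + e3))
    (h3 : P e3 = (-c) • (e2 + e3)) :
    IsRotaBaxter 0 P := by
  open QuaternionAlgebra in
  set φ : Hss →ₗ[ℝ] ℝ := a • reₗ 1 0 0 + b • imIₗ 1 0 0 + c • imJₗ 1 0 0 - c • imKₗ 1 0 0
  have hP : P = φ.smulRight (e2 + e3) := by
    refine (QuaternionAlgebra.basisOneIJK 1 0 0).ext fun i => ?_
    fin_cases i <;> simp [coe_basisOneIJK_Hss, h0, h1, h2, h3] <;> simp [φ, e1, e2, e3]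
  have hφu : φ (e2 + e3) = 0 := by simp [φ, e2, e3]
  intro x y
  simpa [hP] using LinearMap.smulRight_rotaBaxter_zero φ e2_add_e3_mul_self hφu
    (fun x => Submodule.mem_span_singleton.mpr ⟨_, (mul_e2_add_e3 x).symm⟩)
    (fun y => Submodule.mem_span_singleton.mpr ⟨_, (e2_add_e3_mul y).symm⟩) x y
end
end

section
/- For all real numbers a, b, c, the ℝ-linear map P on H_ss determined on the basis by P(1) = a(e₂ − e₃), P(e₁) = b(e₂ − e₃), P(e₂) = c(e₂ − e₃), P(e₃) = c(e₂ − e₃) is a Rota-Baxter operator of weight 0 on H_ss. -/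
noncomputable section

/-! The operator is `P x = φ x • u` with `u = e₂ - e₃` and `φ` a linear functional. Since
`u² = 0`, both sides of the weight-zero identity vanish as soon as `φ` kills the two-sided
ideal generated by `u`; in `H_ss` that ideal is the line `ℝ u`, and `φ u = c - c = 0`. -/

section RankOne

variable {R A : Type*} [CommSemiring R] [Ring A] [Algebra R A]

theorem smulRight_rotaBaxter_weight_zero {φ : A →ₗ[R] R} {u : A} (hu : u * u = 0)
    (hφl : ∀ y, φ (u * y) = 0) (hφr : ∀ x, φ (x * u) = 0) (x y : A) :
    φ.smulRight u x * φ.smulRight u y =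
      φ.smulRight u (φ.smulRight u x * y) + φ.smulRight u (x * φ.smulRight u y) := by
  simp [hu, hφl, hφr]

end RankOne

theorem e2_sub_e3_mul_self : (e2 - e3) * (e2 - e3) = 0 := by
  ext <;> simp [e2, e3]

theorem e2_sub_e3_mul (y : Hss) : (e2 - e3) * y = (y.re + y.imI) • (e2 - e3) := by
  ext <;> simp [e2, e3]

theorem mul_e2_sub_e3 (x : Hss) : x * (e2 - e3) = (x.re - x.imI) • (e2 - e3) := by
  ext <;> simp [e2, e3] <;> ring

def coeffFunctional (a b c : ℝ) : Hss →ₗ[ℝ] ℝ :=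
  a • QuaternionAlgebra.reₗ 1 0 0 + b • QuaternionAlgebra.imIₗ 1 0 0 +
    c • QuaternionAlgebra.imJₗ 1 0 0 + c • QuaternionAlgebra.imKₗ 1 0 0

theorem coeffFunctional_e2_sub_e3 (a b c : ℝ) : coeffFunctional a b c (e2 - e3) = 0 := by
  simp [coeffFunctional, e2, e3]

theorem coe_basisOneIJK_hss :
    ⇑(QuaternionAlgebra.basisOneIJK (1 : ℝ) 0 0) = ![1, e1, e2, e3] := by
  funext i
  fin_cases i <;> ext <;> simp [QuaternionAlgebra.basisOneIJK, e1, e2, e3]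

theorem eq_smulRight_e2_sub_e3 {a b c : ℝ} {P : Hss →ₗ[ℝ] Hss}
    (h0 : P 1 = a • (e2 - e3)) (h1 : P e1 = b • (e2 - e3))
    (h2 : P e2 = c • (e2 - e3)) (h3 : P e3 = c • (e2 - e3)) :
    P = (coeffFunctional a b c).smulRight (e2 - e3) := by
  refine (QuaternionAlgebra.basisOneIJK (1 : ℝ) 0 0).ext fun i => ?_
  fin_cases i <;> simp [coe_basisOneIJK_hss, h0, h1, h2, h3] <;> ext <;>
    simp [coeffFunctional, e1, e2, e3]

theorem rb_w0_family3 (a b c : ℝ)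
    (P : Hss →ₗ[ℝ] Hss)
    (h0 : P 1 = (a) • (e2 - e3))
    (h1 : P e1 = (b) • (e2 - e3))
    (h2 : P e2 = (c) • (e2 - e3))
    (h3 : P e3 = (c) • (e2 - e3)) :
    IsRotaBaxter 0 P := by
  rw [eq_smulRight_e2_sub_e3 h0 h1 h2 h3]
  intro x y
  rw [zero_smul, add_zero]
  refine smulRight_rotaBaxter_weight_zero e2_sub_e3_mul_self (fun y => ?_) (fun x => ?_) x y
  · rw [e2_sub_e3_mul, map_smul, coeffFunctional_e2_sub_e3, smul_zero]
  · rw [mul_e2_sub_e3, map_smul, coeffFunctional_e2_sub_e3, smul_zero]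
end
end

section
/- For all real numbers a, b, the ℝ-linear map P on H_ss determined on the basis by P(1) = 0, P(e₁) = 0, P(e₂) = a − a e₁ + b e₂ + b e₃, P(e₃) = −a + a e₁ − b e₂ − b e₃ is a Rota-Baxter operator of weight 0 on H_ss. -/
noncomputable section

/-!
`P` has rank one: `P x = φ x • v` with `φ x = x.imJ - x.imK` and `v = a(1 - e₁) + b(e₂ + e₃)`.
For such an operator both sides of the weight-zero Rota-Baxter identity are multiples of
`φ x * φ y • v`, and they agree because `v² = 2a v`, `φ (v y) = 2a φ y` and `φ (x v) = 0`.
-/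

theorem LinearMap.smulRight_mul_smulRight_eq {R A : Type*} [CommSemiring R]
    [Semiring A] [Algebra R A] (f : A →ₗ[R] R) (v : A) (c₁ c₂ : R)
    (hvv : v * v = (c₁ + c₂) • v) (hleft : ∀ y, f (v * y) = c₁ * f y)
    (hright : ∀ x, f (x * v) = c₂ * f x) (x y : A) :
    f.smulRight v x * f.smulRight v y =
      f.smulRight v (f.smulRight v x * y) + f.smulRight v (x * f.smulRight v y) := by
  simp only [LinearMap.smulRight_apply, smul_mul_assoc, mul_smul_comm, map_smul, hvv, hleft,
    hright, smul_smul, ← add_smul]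
  congr 1
  ring

namespace Hss

def imJSubImKₗ : Hss →ₗ[ℝ] ℝ :=
  QuaternionAlgebra.imJₗ 1 0 0 - QuaternionAlgebra.imKₗ 1 0 0

def family4Vector (a b : ℝ) : Hss := ⟨a, -a, b, b⟩

variable (a b : ℝ)

theorem family4Vector_mul_self :
    family4Vector a b * family4Vector a b = (2 * a) • family4Vector a b := by
  ext <;>
    simp only [family4Vector, QuaternionAlgebra.mk_mul_mk, QuaternionAlgebra.smul_mk, smul_eq_mul] <;>
    ring

theorem imJSubImKₗ_family4Vector_mul (y : Hss) :
    imJSubImKₗ (family4Vector a b * y) = 2 * a * imJSubImKₗ y := by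
  simp only [imJSubImKₗ, family4Vector, LinearMap.sub_apply, QuaternionAlgebra.imJₗ_apply,
    QuaternionAlgebra.imKₗ_apply, QuaternionAlgebra.imJ_mul, QuaternionAlgebra.imK_mul]
  ring

theorem imJSubImKₗ_mul_family4Vector (x : Hss) : imJSubImKₗ (x * family4Vector a b) = 0 := by
  simp [imJSubImKₗ, family4Vector]

theorem coe_basisOneIJK : ⇑(QuaternionAlgebra.basisOneIJK (1 : ℝ) 0 0) = ![1, e1, e2, e3] := by
  ext i : 1
  fin_cases i <;> ext <;> simp [QuaternionAlgebra.basisOneIJK, e1, e2, e3]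

theorem eq_smulRight_family4Vector (P : Hss →ₗ[ℝ] Hss) (h0 : P 1 = 0) (h1 : P e1 = 0)
    (h2 : P e2 = a • (1 : Hss) - a • e1 + b • e2 + b • e3)
    (h3 : P e3 = (-a) • (1 : Hss) + a • e1 - b • e2 - b • e3) :
    P = imJSubImKₗ.smulRight (family4Vector a b) := by
  refine (QuaternionAlgebra.basisOneIJK (1 : ℝ) 0 0).ext fun i => ?_
  rw [coe_basisOneIJK]
  fin_cases i <;>
    simp only [Fin.zero_eta, Fin.mk_one, Fin.reduceFinMk, Matrix.cons_val, h0, h1, h2, h3] <;>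
    ext <;> simp [imJSubImKₗ, family4Vector, e1, e2, e3]

end Hss

theorem rb_w0_family4 (a b : ℝ)
    (P : Hss →ₗ[ℝ] Hss)
    (h0 : P 1 = 0)
    (h1 : P e1 = 0)
    (h2 : P e2 = (a) • (1 : Hss) - (a) • e1 + (b) • e2 + (b) • e3)
    (h3 : P e3 = (-a) • (1 : Hss) + (a) • e1 - (b) • e2 - (b) • e3) :
    IsRotaBaxter 0 P := by
  intro x y
  rw [zero_smul, add_zero, Hss.eq_smulRight_family4Vector a b P h0 h1 h2 h3]
  refine LinearMap.smulRight_mul_smulRight_eq _ _ (2 * a) 0 ?_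
    (Hss.imJSubImKₗ_family4Vector_mul a b) (fun x => ?_) x y
  · rw [add_zero, Hss.family4Vector_mul_self]
  · rw [zero_mul, Hss.imJSubImKₗ_mul_family4Vector]
end
end

section
/- For all real numbers a, b, c with a ≠ 0 and b ≠ 0, the ℝ-linear map P on H_ss determined on the basis by P(1) = 0, P(e₁) = a + a e₁ + c e₂ + (a²/b + c) e₃, P(e₂) = b + b e₁ + (bc/a) e₂ + (bc/a + a) e₃, P(e₃) = −b − b e₁ − (bc/a) e₂ − ((a² + bc)/a) e₃ is a Rota-Baxter operator of weight 0 on H_ss. -/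
/-! `P` has rank one: `P x = f x • u` with `f x = a x₁ + b (x₂ - x₃)` and
`u = 1 + e₁ + (c/a) e₂ + (c/a + a/b) e₃`. Since `e₂, e₃` span a square-zero ideal anticommuting
with `e₁`, one finds `u² = 2u`, `f (u y) = 0` and `f (y u) = 2 f y`. Hence
`P (P x * y) = 0` while `P x * P y` and `P (x * P y)` both equal `2 f x f y • u`. -/

noncomputable section

theorem smulRight_rotaBaxter_of_weight_zero {R A : Type*} [CommRing R] [Ring A] [Algebra R A]
    (f : A →ₗ[R] R) (u : A) (α β : R) (hu : u * u = (α + β) • u)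
    (hl : ∀ y, f (u * y) = α * f y) (hr : ∀ y, f (y * u) = β * f y) (x y : A) :
    f.smulRight u x * f.smulRight u y =
      f.smulRight u (f.smulRight u x * y) + f.smulRight u (x * f.smulRight u y) := by
  simp only [LinearMap.smulRight_apply, hu, smul_mul_assoc, mul_smul_comm, map_smul, hl, hr,
    smul_smul, ← add_smul]
  ring_nf

namespace Hss

open QuaternionAlgebra

theorem linearMap_ext {P Q : Hss →ₗ[ℝ] Hss} (h0 : P 1 = Q 1) (h1 : P e1 = Q e1)
    (h2 : P e2 = Q e2) (h3 : P e3 = Q e3) : P = Q := by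
  refine (basisOneIJK (1 : ℝ) 0 0).ext fun i => ?_
  fin_cases i
  all_goals simp only [basisOneIJK, Module.Basis.coe_ofEquivFun, coe_linearEquivTuple_symm]
  exacts [h0, h1, h2, h3]

def family9Form (a b : ℝ) : Hss →ₗ[ℝ] ℝ :=
  a • imIₗ 1 0 0 + b • (imJₗ 1 0 0 - imKₗ 1 0 0)

theorem family9Form_apply (a b : ℝ) (y : Hss) :
    family9Form a b y = a * y.imI + b * (y.imJ - y.imK) :=
  rfl

def family9Vector (a b c : ℝ) : Hss :=
  ⟨1, 1, c / a, c / a + a / b⟩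

theorem family9Vector_mul_self (a b c : ℝ) :
    family9Vector a b c * family9Vector a b c = (2 : ℝ) • family9Vector a b c := by
  ext <;> simp [family9Vector] <;> ring

theorem family9Form_family9Vector_mul (a b c : ℝ) (hb : b ≠ 0) (y : Hss) :
    family9Form a b (family9Vector a b c * y) = 0 := by
  simp only [family9Form_apply, family9Vector, imI_mul, imJ_mul, imK_mul]
  linear_combination (-(y.imI + y.re)) * mul_div_cancel₀ a hb

theorem family9Form_mul_family9Vector (a b c : ℝ) (hb : b ≠ 0) (y : Hss) :
    family9Form a b (y * family9Vector a b c) = 2 * family9Form a b y := by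
  simp only [family9Form_apply, family9Vector, imI_mul, imJ_mul, imK_mul]
  linear_combination (y.imI - y.re) * mul_div_cancel₀ a hb

theorem eq_family9Form_smulRight {a b c : ℝ} (ha : a ≠ 0) (hb : b ≠ 0) {P : Hss →ₗ[ℝ] Hss}
    (h0 : P 1 = 0) (h1 : P e1 = a • 1 + a • e1 + c • e2 + (a ^ 2 / b + c) • e3)
    (h2 : P e2 = b • 1 + b • e1 + (b * c / a) • e2 + (b * c / a + a) • e3)
    (h3 : P e3 = -b • 1 - b • e1 - (b * c / a) • e2 - ((a ^ 2 + b * c) / a) • e3) :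
    P = (family9Form a b).smulRight (family9Vector a b c) := by
  refine linearMap_ext ?_ ?_ ?_ ?_ <;> simp only [h0, h1, h2, h3] <;> ext <;>
    simp [family9Form, family9Vector, e1, e2, e3] <;> field_simp <;> ring

end Hss

theorem rb_w0_family9 (a b c : ℝ) (ha : a ≠ 0) (hb : b ≠ 0)
    (P : Hss →ₗ[ℝ] Hss)
    (h0 : P 1 = 0)
    (h1 : P e1 = (a) • (1 : Hss) + (a) • e1 + (c) • e2 + (a^2/b + c) • e3)
    (h2 : P e2 = (b) • (1 : Hss) + (b) • e1 + (b*c/a) • e2 + (b*c/a + a) • e3)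
    (h3 : P e3 = (-b) • (1 : Hss) - (b) • e1 - (b*c/a) • e2 - ((a^2 + b*c)/a) • e3) :
    IsRotaBaxter 0 P := by
  rw [Hss.eq_family9Form_smulRight ha hb h0 h1 h2 h3]
  intro x y
  rw [zero_smul, add_zero]
  refine smulRight_rotaBaxter_of_weight_zero _ _ 0 2 ?_ (fun y => ?_)
    (Hss.family9Form_mul_family9Vector a b c hb) x y
  · rw [zero_add, Hss.family9Vector_mul_self]
  · rw [Hss.family9Form_family9Vector_mul a b c hb, zero_mul]
end
end

section
/- For all real numbers a, b, c with a ≠ 0 and b ≠ 0, the ℝ-linear map P on H_ss determined on the basis by P(1) = 0, P(e₁) = a + a e₁ + c e₂ − ((a² + bc)/b) e₃, P(e₂) = b + b e₁ + (bc/a) e₂ − ((a² + bc)/a) e₃, P(e₃) = b + b e₁ + (bc/a) e₂ − ((a² + bc)/a) e₃ is a Rota-Baxter operator of weight 0 on H_ss. -/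
noncomputable section

/-!
`P(e₂) = P(e₃) = (b/a) P(e₁)` and `P(1) = 0`, so `P x = φ(x) u` is of rank one, with
`u = P(e₁)` and `φ(x) = x₁ + (b/a)(x₂ + x₃)`. For a rank-one operator the weight-zero
Rota-Baxter identity reads `φ(x)φ(y) u² = (φ(x)φ(uy) + φ(y)φ(xu)) u`, which follows from
`φ(u·) = s φ`, `φ(·u) = t φ` and `u² = (s + t) u`. Here `u² = 2a u`, `φ(u·) = 2a φ` and
`φ(·u) = 0`.
-/

section RankOne

variable {R A : Type*} [CommSemiring R] [Semiring A] [Algebra R A]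

theorem LinearMap.smulRight_rotaBaxter_identity (φ : A →ₗ[R] R) (u : A) (s t : R)
    (hu : u * u = (s + t) • u) (hl : ∀ y, φ (u * y) = s * φ y)
    (hr : ∀ x, φ (x * u) = t * φ x)
    (x y : A) :
    φ.smulRight u x * φ.smulRight u y =
      φ.smulRight u (φ.smulRight u x * y) + φ.smulRight u (x * φ.smulRight u y) := by
  simp only [LinearMap.smulRight_apply, smul_mul_assoc, mul_smul_comm, map_smul, hu, hl, hr]
  module

end RankOne

def rbImageVector (a b c : ℝ) : Hss := ⟨a, a, c, -((a ^ 2 + b * c) / b)⟩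

def rbCoeffFunctional (a b : ℝ) : Hss →ₗ[ℝ] ℝ :=
  QuaternionAlgebra.imIₗ 1 0 0 +
    (b / a) • (QuaternionAlgebra.imJₗ 1 0 0 + QuaternionAlgebra.imKₗ 1 0 0)

theorem rbCoeffFunctional_apply (a b : ℝ) (x : Hss) :
    rbCoeffFunctional a b x = x.imI + b / a * (x.imJ + x.imK) :=
  rfl

theorem rbImageVector_eq (a b c : ℝ) :
    rbImageVector a b c = a • (1 : Hss) + a • e1 + c • e2 - ((a ^ 2 + b * c) / b) • e3 := by
  ext <;> simp [rbImageVector, e1, e2, e3]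

theorem div_smul_rbImageVector (a b c : ℝ) (ha : a ≠ 0) (hb : b ≠ 0) :
    (b / a) • rbImageVector a b c =
      b • (1 : Hss) + b • e1 + (b * c / a) • e2 - ((a ^ 2 + b * c) / a) • e3 := by
  ext <;> simp [rbImageVector, e1, e2, e3] <;> field_simp

theorem rbImageVector_mul_self (a b c : ℝ) :
    rbImageVector a b c * rbImageVector a b c = (2 * a) • rbImageVector a b c := by
  ext <;> simp [rbImageVector] <;> ring

theorem rbCoeffFunctional_rbImageVector_mul (a b c : ℝ) (ha : a ≠ 0) (hb : b ≠ 0) (y : Hss) :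
    rbCoeffFunctional a b (rbImageVector a b c * y) = 2 * a * rbCoeffFunctional a b y := by
  simp only [rbCoeffFunctional_apply, rbImageVector, QuaternionAlgebra.imI_mul,
    QuaternionAlgebra.imJ_mul, QuaternionAlgebra.imK_mul]
  field_simp
  ring

theorem rbCoeffFunctional_mul_rbImageVector (a b c : ℝ) (ha : a ≠ 0) (hb : b ≠ 0) (x : Hss) :
    rbCoeffFunctional a b (x * rbImageVector a b c) = 0 := by
  simp only [rbCoeffFunctional_apply, rbImageVector, QuaternionAlgebra.imI_mul,
    QuaternionAlgebra.imJ_mul, QuaternionAlgebra.imK_mul]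
  field_simp
  ring

theorem basisOneIJK_eq :
    (QuaternionAlgebra.basisOneIJK 1 0 0 : Fin 4 → Hss) = ![1, e1, e2, e3] := by
  ext i : 1
  fin_cases i <;> ext <;> simp [QuaternionAlgebra.basisOneIJK, e1, e2, e3]

theorem eq_smulRight_rbCoeffFunctional (a b : ℝ) (u : Hss) (P : Hss →ₗ[ℝ] Hss)
    (h0 : P 1 = 0) (h1 : P e1 = u) (h2 : P e2 = (b / a) • u) (h3 : P e3 = (b / a) • u) :
    P = (rbCoeffFunctional a b).smulRight u := by
  refine (QuaternionAlgebra.basisOneIJK 1 0 0).ext fun i => ?_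
  rw [basisOneIJK_eq]
  fin_cases i <;> simp [h0, h1, h2, h3] <;> simp [rbCoeffFunctional_apply, e1, e2, e3]

theorem rb_w0_family11 (a b c : ℝ) (ha : a ≠ 0) (hb : b ≠ 0)
    (P : Hss →ₗ[ℝ] Hss)
    (h0 : P 1 = 0)
    (h1 : P e1 = (a) • (1 : Hss) + (a) • e1 + (c) • e2 - ((a^2 + b*c)/b) • e3)
    (h2 : P e2 = (b) • (1 : Hss) + (b) • e1 + (b*c/a) • e2 - ((a^2 + b*c)/a) • e3)
    (h3 : P e3 = (b) • (1 : Hss) + (b) • e1 + (b*c/a) • e2 - ((a^2 + b*c)/a) • e3) :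
    IsRotaBaxter 0 P := by
  rw [← rbImageVector_eq] at h1
  rw [← div_smul_rbImageVector a b c ha hb] at h2 h3
  rw [eq_smulRight_rbCoeffFunctional a b _ P h0 h1 h2 h3]
  intro x y
  rw [zero_smul, add_zero]
  exact LinearMap.smulRight_rotaBaxter_identity _ _ (2 * a) 0
    (by rw [add_zero, rbImageVector_mul_self])
    (rbCoeffFunctional_rbImageVector_mul a b c ha hb)
    (fun x => by rw [rbCoeffFunctional_mul_rbImageVector a b c ha hb, zero_mul]) x y
end
end

section
/- Let λ be a nonzero real number. For all real numbers a, b, the ℝ-linear map P on H_ss determined on the basis by P(1) = 0, P(e₁) = −λ − λ e₁ + a e₂ + b e₃, P(e₂) = 0, P(e₃) = 0 is a Rota-Baxter operator of weight λ on H_ss. -/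
noncomputable section

/-!
The operator has rank one: `P x = imI x • u` with `u = P e₁`. Such a map is a Rota–Baxter
operator as soon as `u² = μ u` and the scalar identity
`μ φ(x) φ(y) = φ(x) φ(u y) + φ(y) φ(x u) + λ φ(x y)` holds for `φ = imI`. Writing
`u = -λ (1 + e₁) + w` with `w = a e₂ + b e₃`, one has `(1 + e₁)² = 2 (1 + e₁)`, `w² = 0` and
`e₁ w = -w e₁`, whence `u² = -2λ u`; the scalar identity follows from
`imI (x y) = re x · imI y + imI x · re y` in `H_ss`.
-/

theorem LinearMap.smulRight_rotaBaxter {R A : Type*} [CommRing R] [Ring A] [Algebra R A]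
    (l μ : R) (φ : A →ₗ[R] R) (u : A) (hu : u * u = μ • u)
    (hφ : ∀ x y, μ * (φ x * φ y) = φ x * φ (u * y) + φ y * φ (x * u) + l * φ (x * y)) (x y : A) :
    φ.smulRight u x * φ.smulRight u y =
      φ.smulRight u (φ.smulRight u x * y) + φ.smulRight u (x * φ.smulRight u y) +
        l • φ.smulRight u (x * y) := by
  simp only [LinearMap.smulRight_apply, hu, smul_mul_assoc, mul_smul_comm, map_smul, smul_smul,
    ← add_smul, ← hφ]
  ring_nf

namespace Hss

open QuaternionAlgebra

lemma eq_re_smul_one_add (z : Hss) : z = z.re • 1 + z.imI • e1 + z.imJ • e2 + z.imK • e3 := by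
  ext <;> simp [e1, e2, e3]

lemma eq_smulRight_imI (P : Hss →ₗ[ℝ] Hss) (u : Hss) (h0 : P 1 = 0) (h1 : P e1 = u)
    (h2 : P e2 = 0) (h3 : P e3 = 0) : P = (imIₗ 1 0 0).smulRight u := by
  ext1 z
  conv_lhs => rw [eq_re_smul_one_add z]
  simp [h0, h1, h2, h3]

lemma imI_mul (x y : Hss) : (x * y).imI = x.re * y.imI + x.imI * y.re := by
  simp [QuaternionAlgebra.imI_mul]

section Family1

variable (l a b : ℝ)

/-- The prescribed value `P e₁ = -λ - λ e₁ + a e₂ + b e₃`. -/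
def family1 : Hss := (-l) • 1 - l • e1 + a • e2 + b • e3

@[simp]
lemma re_family1 : (family1 l a b).re = -l := by
  simp [family1, e1, e2, e3]

@[simp]
lemma imI_family1 : (family1 l a b).imI = -l := by
  simp [family1, e1, e2, e3]

lemma family1_mul_self : family1 l a b * family1 l a b = (-2 * l) • family1 l a b := by
  ext <;> simp [family1, e1, e2, e3] <;> ring

end Family1

end Hss

theorem rb_nonzero_weight_family1_general (l : ℝ) (a b : ℝ)
    (P : Hss →ₗ[ℝ] Hss)
    (h0 : P 1 = 0)
    (h1 : P e1 = (-l) • (1 : Hss) - (l) • e1 + (a) • e2 + (b) • e3)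
    (h2 : P e2 = 0)
    (h3 : P e3 = 0) :
    IsRotaBaxter l P := by
  rw [IsRotaBaxter, Hss.eq_smulRight_imI P (Hss.family1 l a b) h0 h1 h2 h3]
  refine LinearMap.smulRight_rotaBaxter l (-2 * l) _ _ (Hss.family1_mul_self l a b) fun x y => ?_
  simp only [QuaternionAlgebra.imIₗ_apply, Hss.imI_mul, Hss.re_family1, Hss.imI_family1]
  ring

theorem rb_nonzero_weight_family1 (l : ℝ) (hl : l ≠ 0) (a b : ℝ)
    (P : Hss →ₗ[ℝ] Hss)
    (h0 : P 1 = 0)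
    (h1 : P e1 = (-l) • (1 : Hss) - (l) • e1 + (a) • e2 + (b) • e3)
    (h2 : P e2 = 0)
    (h3 : P e3 = 0) :
    IsRotaBaxter l P :=
  rb_nonzero_weight_family1_general l a b P h0 h1 h2 h3
end
end

section
/- Let λ be a nonzero real number. For all real numbers a, b, the ℝ-linear map P on H_ss determined on the basis by P(1) = 0, P(e₁) = a e₂ + b e₃, P(e₂) = −λ e₂, P(e₃) = −λ e₃ is a Rota-Baxter operator of weight λ on H_ss. -/
noncomputable section

/- The map `P` takes values in the square-zero ideal `N = ℝe₂ ⊕ ℝe₃`, acts on `N` as `-λ`, and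
is a derivation of `H_ss`. For such a map the left side `P x * P y` of the Rota-Baxter identity
vanishes, and so does the right side, which becomes `λ (P (x y) - P x * y - x * P y)`. -/

theorem rotaBaxter_identity_of_derivation_into_sq_zero {R A : Type*} [Ring R]
    [NonUnitalNonAssocRing A] [Module R A] (I : TwoSidedIdeal A)
    (hI : ∀ x ∈ I, ∀ y ∈ I, x * y = 0) (l : R) (P : A →ₗ[R] A) (hPI : ∀ x, P x ∈ I)
    (hPI_eq : ∀ x ∈ I, P x = -l • x) (hP_mul : ∀ x y, P (x * y) = P x * y + x * P y)
    (x y : A) : P x * P y = P (P x * y) + P (x * P y) + l • P (x * y) := by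
  rw [hI _ (hPI x) _ (hPI y), hPI_eq _ (I.mul_mem_right _ _ (hPI x)),
    hPI_eq _ (I.mul_mem_left _ _ (hPI y)), hP_mul, neg_smul, neg_smul, smul_add]
  abel

namespace Hss

def idealE23 : TwoSidedIdeal Hss :=
  .mk' {x | x.re = 0 ∧ x.imI = 0} (by simp) (by simp_all) (by simp_all)
    (by simp_all [QuaternionAlgebra.re_mul, QuaternionAlgebra.imI_mul])
    (by simp_all [QuaternionAlgebra.re_mul, QuaternionAlgebra.imI_mul])

theorem mem_idealE23 {x : Hss} : x ∈ idealE23 ↔ x.re = 0 ∧ x.imI = 0 :=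
  TwoSidedIdeal.mem_mk' _ _ _ _ _ _ x

theorem mul_eq_zero_of_mem_idealE23 (x : Hss) (hx : x ∈ idealE23) (y : Hss)
    (hy : y ∈ idealE23) : x * y = 0 := by
  rw [mem_idealE23] at hx hy
  ext <;> simp [hx, hy]

theorem linearMap_apply_eq_of_basis (P : Hss →ₗ[ℝ] Hss) (x : Hss) :
    P x = x.re • P 1 + x.imI • P e1 + x.imJ • P e2 + x.imK • P e3 := by
  have hx : x = x.re • (1 : Hss) + x.imI • e1 + x.imJ • e2 + x.imK • e3 := by
    ext <;> simp [e1, e2, e3]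
  conv_lhs => rw [hx]
  simp only [map_add, map_smul]

end Hss

open Hss in
theorem rb_nonzero_weight_family2_general (l : ℝ) (a b : ℝ)
    (P : Hss →ₗ[ℝ] Hss)
    (h0 : P 1 = 0)
    (h1 : P e1 = (a) • e2 + (b) • e3)
    (h2 : P e2 = (-l) • e2)
    (h3 : P e3 = (-l) • e3) :
    IsRotaBaxter l P := by
  have hP (x : Hss) : P x = (a * x.imI - l * x.imJ) • e2 + (b * x.imI - l * x.imK) • e3 := by
    rw [linearMap_apply_eq_of_basis, h0, h1, h2, h3]
    ext <;> simp [e2, e3] <;> ring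
  refine rotaBaxter_identity_of_derivation_into_sq_zero idealE23 mul_eq_zero_of_mem_idealE23 l P
    (fun x => ?_) (fun x hx => ?_) (fun x y => ?_)
  · simp [mem_idealE23, hP, e2, e3]
  · rw [mem_idealE23] at hx
    ext <;> simp [hP, hx, e2, e3]
  · rw [hP, hP, hP]
    ext <;> simp [e2, e3, QuaternionAlgebra.re_mul, QuaternionAlgebra.imI_mul,
      QuaternionAlgebra.imJ_mul, QuaternionAlgebra.imK_mul] <;> ring

theorem rb_nonzero_weight_family2 (l : ℝ) (hl : l ≠ 0) (a b : ℝ)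
    (P : Hss →ₗ[ℝ] Hss)
    (h0 : P 1 = 0)
    (h1 : P e1 = (a) • e2 + (b) • e3)
    (h2 : P e2 = (-l) • e2)
    (h3 : P e3 = (-l) • e3) :
    IsRotaBaxter l P :=
  rb_nonzero_weight_family2_general l a b P h0 h1 h2 h3
end
end

section
/- Let λ be a nonzero real number. For all real numbers a, b, c with a ≠ 0, the ℝ-linear map P on H_ss determined on the basis by P(1) = 0, P(e₁) = −b + b e₁ + ((b−c)(b+λ)/a) e₂ − (c(b+λ)/a) e₃, P(e₂) = a − a e₁ + (c − b − λ) e₂ + c e₃, P(e₃) = −a + a e₁ + (b − c) e₂ + (−c − λ) e₃ is a Rota-Baxter operator of weight λ on H_ss. -/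
noncomputable section

/-!
For `λ ≠ 0`, `-P/λ` is the projection of `H_ss` onto `S = span {e₂ + e₃, P e₃}` along
`K = span {1, k}`, `k = a e₁ + (b - c) e₂ - c e₃`. Both summands are subalgebras: `k² = a²`,
`(e₂ + e₃)² = 0`, `(e₂ + e₃) P e₃ = -2a (e₂ + e₃)`, `P e₃ (e₂ + e₃) = 0`, `(P e₃)² = -2a P e₃`.
A linear map that kills one subalgebra and acts as `-λ` on another, the two spanning the algebra,
is Rota-Baxter of weight `λ`: writing `x = x₀ + x₁`, `y = y₀ + y₁`, both sides reduce to
`λ² x₁ y₁`.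
-/

theorem rotaBaxter_identity_of_subalgebra_split {R A : Type*} [CommRing R] [Ring A] [Algebra R A]
    (P : A →ₗ[R] A) (l : R) {K S : Submodule R A} (hKS : K ⊔ S = ⊤) (hK : K * K ≤ K)
    (hS : S * S ≤ S) (hPK : K ≤ LinearMap.ker P) (hPS : S ≤ Module.End.eigenspace P (-l))
    (x y : A) : P x * P y = P (P x * y) + P (x * P y) + l • P (x * y) := by
  have split (z : A) : ∃ z₀ ∈ K, ∃ z₁ ∈ S, z₀ + z₁ = z :=
    Submodule.mem_sup.mp (hKS ▸ Submodule.mem_top)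
  have hP₀ {z : A} (hz : z ∈ K) : P z = 0 := hPK hz
  have hP₁ {z : A} (hz : z ∈ S) : P z = -l • z := Module.End.mem_eigenspace_iff.mp (hPS hz)
  obtain ⟨x₀, hx₀, x₁, hx₁, rfl⟩ := split x
  obtain ⟨y₀, hy₀, y₁, hy₁, rfl⟩ := split y
  simp only [map_add, hP₀ hx₀, hP₀ hy₀, hP₁ hx₁, hP₁ hy₁, zero_add, add_mul, mul_add,
    smul_mul_assoc, mul_smul_comm, map_smul, hP₀ (hK (Submodule.mul_mem_mul hx₀ hy₀)),
    hP₁ (hS (Submodule.mul_mem_mul hx₁ hy₁))]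
  module

theorem Submodule.span_pair_mul_le {R A : Type*} [CommSemiring R] [Semiring A] [Algebra R A]
    {u v : A} (huu : u * u ∈ span R {u, v}) (huv : u * v ∈ span R {u, v})
    (hvu : v * u ∈ span R {u, v}) (hvv : v * v ∈ span R {u, v}) :
    span R {u, v} * span R {u, v} ≤ span R {u, v} := by
  rw [span_mul_span, span_le, Set.mul_subset_iff]
  simp only [Set.mem_insert_iff, Set.mem_singleton_iff, forall_eq_or_imp, forall_eq]
  exact ⟨⟨huu, huv⟩, hvu, hvv⟩

def kernelGen (a b c : ℝ) : Hss := a • e1 + (b - c) • e2 - c • e3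

-- the prescribed value of `P e₃`
def imageGen (a b c l : ℝ) : Hss := (-a) • (1 : Hss) + a • e1 + (b - c) • e2 + (-c - l) • e3

theorem kernelGen_mul_self (a b c : ℝ) : kernelGen a b c * kernelGen a b c = a ^ 2 • 1 := by
  ext <;> simp [kernelGen, e1, e2, e3] <;> ring

theorem e2_add_e3_mul_imageGen (a b c l : ℝ) :
    (e2 + e3) * imageGen a b c l = (-2 * a) • (e2 + e3) := by
  ext <;> simp [imageGen, e1, e2, e3] <;> ring

theorem imageGen_mul_e2_add_e3 (a b c l : ℝ) : imageGen a b c l * (e2 + e3) = 0 := by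
  ext <;> simp [imageGen, e1, e2, e3]

theorem imageGen_mul_self (a b c l : ℝ) :
    imageGen a b c l * imageGen a b c l = (-2 * a) • imageGen a b c l := by
  ext <;> simp [imageGen, e1, e2, e3] <;> ring

open Submodule

theorem span_one_kernelGen_mul_le (a b c : ℝ) :
    span ℝ {1, kernelGen a b c} * span ℝ {1, kernelGen a b c} ≤ span ℝ {1, kernelGen a b c} := by
  have h1 : (1 : Hss) ∈ span ℝ {1, kernelGen a b c} := subset_span (by simp)
  have hk : kernelGen a b c ∈ span ℝ {1, kernelGen a b c} := subset_span (by simp)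
  apply span_pair_mul_le
  · rwa [one_mul]
  · rwa [one_mul]
  · rwa [mul_one]
  · rw [kernelGen_mul_self]; exact smul_mem _ _ h1

theorem span_e2_add_e3_imageGen_mul_le (a b c l : ℝ) :
    span ℝ {e2 + e3, imageGen a b c l} * span ℝ {e2 + e3, imageGen a b c l} ≤
      span ℝ {e2 + e3, imageGen a b c l} := by
  have hf : e2 + e3 ∈ span ℝ {e2 + e3, imageGen a b c l} := subset_span (by simp)
  have hg : imageGen a b c l ∈ span ℝ {e2 + e3, imageGen a b c l} := subset_span (by simp)
  apply span_pair_mul_le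
  · rw [e2_add_e3_mul_self]; exact zero_mem _
  · rw [e2_add_e3_mul_imageGen]; exact smul_mem _ _ hf
  · rw [imageGen_mul_e2_add_e3]; exact zero_mem _
  · rw [imageGen_mul_self]; exact smul_mem _ _ hg

theorem span_sup_span_eq_top {a l : ℝ} (b c : ℝ) (ha : a ≠ 0) (hl : l ≠ 0) :
    span ℝ {1, kernelGen a b c} ⊔ span ℝ {e2 + e3, imageGen a b c l} = ⊤ := by
  refine eq_top_iff'.mpr fun x => mem_sup.mpr ?_
  -- the `e₂ - e₃` coordinate determines `δ`; then `e₁`, `e₂` and `re` give the other coefficients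
  set δ := (a * (x.imJ - x.imK) - b * x.imI) / (a * l)
  refine ⟨(x.re + a * δ) • 1 + (x.imI / a - δ) • kernelGen a b c, mem_span_pair.mpr ⟨_, _, rfl⟩,
    (x.imJ - (b - c) * x.imI / a) • (e2 + e3) + δ • imageGen a b c l,
    mem_span_pair.mpr ⟨_, _, rfl⟩, ?_⟩
  ext <;> simp [kernelGen, imageGen, e1, e2, e3, δ] <;> field_simp <;> ring

theorem rb_nonzero_weight_family3 (l : ℝ) (hl : l ≠ 0) (a b c : ℝ) (ha : a ≠ 0)
    (P : Hss →ₗ[ℝ] Hss)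
    (h0 : P 1 = 0)
    (h1 : P e1 = (-b) • (1 : Hss) + (b) • e1 + ((b - c)*(b + l)/a) • e2 - (c*(b + l)/a) • e3)
    (h2 : P e2 = (a) • (1 : Hss) - (a) • e1 + (c - b - l) • e2 + (c) • e3)
    (h3 : P e3 = (-a) • (1 : Hss) + (a) • e1 + (b - c) • e2 + (-c - l) • e3) :
    IsRotaBaxter l P := by
  have hk : P (kernelGen a b c) = 0 := by
    simp only [kernelGen, map_add, map_sub, map_smul, h1, h2, h3]
    ext <;> simp [e1, e2, e3] <;> field_simp <;> ring
  have hf : P (e2 + e3) = -l • (e2 + e3) := by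
    rw [map_add, h2, h3]
    ext <;> simp [e1, e2, e3] <;> ring
  have hg : P (imageGen a b c l) = -l • imageGen a b c l := by
    simp only [imageGen, map_add, map_smul, h0, h1, h2, h3]
    ext <;> simp [e1, e2, e3] <;> field_simp <;> ring
  intro x y
  refine rotaBaxter_identity_of_subalgebra_split P l (span_sup_span_eq_top b c ha hl)
    (span_one_kernelGen_mul_le a b c) (span_e2_add_e3_imageGen_mul_le a b c l) ?_ ?_ x y
  · rw [span_le, Set.insert_subset_iff, Set.singleton_subset_iff]
    exact ⟨h0, hk⟩
  · rw [span_le, Set.insert_subset_iff, Set.singleton_subset_iff]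
    exact ⟨Module.End.mem_eigenspace_iff.mpr hf, Module.End.mem_eigenspace_iff.mpr hg⟩
end
end

section
/- Let λ be a nonzero real number. For all real numbers a, b, c with a ≠ 0, the ℝ-linear map P on H_ss determined on the basis by P(1) = 0, P(e₁) = −b + b e₁ + (b(b−c+λ)/a) e₂ − (bc/a) e₃, P(e₂) = a − a e₁ + (c − b − λ) e₂ + c e₃, P(e₃) = −a + a e₁ + (b − c + λ) e₂ − c e₃ is a Rota-Baxter operator of weight λ on H_ss. -/
/-!
Since `P 1 = 0`, the operator depends only on the `e₁, e₂, e₃`-coordinates of its argument, so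
both sides of the Rota-Baxter identity are explicit bilinear expressions in the coordinates of
`x` and `y`. Substituting `b = a d` (possible because `a ≠ 0`) clears the denominators, and the
identity reduces to a polynomial identity in `a, c, d, λ`, checked by `ring` componentwise.
-/

noncomputable section

theorem Hss.eq_sum_basis_s13 (z : Hss) : z = z.re • 1 + z.imI • e1 + z.imJ • e2 + z.imK • e3 := by
  ext <;> simp [e1, e2, e3]

theorem Hss.map_eq_of_map_one_eq_zero {P : Hss →ₗ[ℝ] Hss} (h0 : P 1 = 0) (z : Hss) :
    P z = z.imI • P e1 + z.imJ • P e2 + z.imK • P e3 := by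
  conv_lhs => rw [Hss.eq_sum_basis_s13 z]
  simp [h0]

open QuaternionAlgebra in
theorem isRotaBaxter_family4_polynomial (l a c d : ℝ) (P : Hss →ₗ[ℝ] Hss) (h0 : P 1 = 0)
    (h1 : P e1 = (-(a*d)) • (1 : Hss) + (a*d) • e1 + (d*(a*d - c + l)) • e2 - (d*c) • e3)
    (h2 : P e2 = a • (1 : Hss) - a • e1 + (c - a*d - l) • e2 + c • e3)
    (h3 : P e3 = (-a) • (1 : Hss) + a • e1 + (a*d - c + l) • e2 - c • e3) :
    IsRotaBaxter l P := by
  have hP := Hss.map_eq_of_map_one_eq_zero h0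
  simp only [h1, h2, h3] at hP
  intro x y
  simp only [hP]
  ext <;>
    simp only [e1, e2, e3, re_mul, imI_mul, imJ_mul, imK_mul, re_add, imI_add, imJ_add, imK_add,
      re_sub, imI_sub, imJ_sub, imK_sub, re_smul, imI_smul, imJ_smul, imK_smul, re_one, imI_one,
      imJ_one, imK_one, smul_eq_mul] <;>
    ring

theorem rb_nonzero_weight_family4_general (l : ℝ) (a b c : ℝ) (ha : a ≠ 0)
    (P : Hss →ₗ[ℝ] Hss)
    (h0 : P 1 = 0)
    (h1 : P e1 = (-b) • (1 : Hss) + (b) • e1 + (b*(b - c + l)/a) • e2 - (b*c/a) • e3)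
    (h2 : P e2 = (a) • (1 : Hss) - (a) • e1 + (c - b - l) • e2 + (c) • e3)
    (h3 : P e3 = (-a) • (1 : Hss) + (a) • e1 + (b - c + l) • e2 - (c) • e3) :
    IsRotaBaxter l P := by
  obtain ⟨d, rfl⟩ : ∃ d, b = a * d := ⟨b / a, by field_simp⟩
  have hcoeff₂ : a * d * (a * d - c + l) / a = d * (a * d - c + l) := by field_simp
  have hcoeff₃ : a * d * c / a = d * c := by field_simp
  rw [hcoeff₂, hcoeff₃] at h1
  exact isRotaBaxter_family4_polynomial l a c d P h0 h1 h2 h3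

theorem rb_nonzero_weight_family4 (l : ℝ) (hl : l ≠ 0) (a b c : ℝ) (ha : a ≠ 0)
    (P : Hss →ₗ[ℝ] Hss)
    (h0 : P 1 = 0)
    (h1 : P e1 = (-b) • (1 : Hss) + (b) • e1 + (b*(b - c + l)/a) • e2 - (b*c/a) • e3)
    (h2 : P e2 = (a) • (1 : Hss) - (a) • e1 + (c - b - l) • e2 + (c) • e3)
    (h3 : P e3 = (-a) • (1 : Hss) + (a) • e1 + (b - c + l) • e2 - (c) • e3) :
    IsRotaBaxter l P :=
  rb_nonzero_weight_family4_general l a b c ha P h0 h1 h2 h3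
end
end

section
/- Let λ be a nonzero real number. For all real numbers a, b, c with a ≠ 0, the ℝ-linear map P on H_ss determined on the basis by P(1) = −λ, P(e₁) = (−b − λ) + b e₁ + ((b−c)(b+λ)/a) e₂ − (c(b+λ)/a) e₃, P(e₂) = a − a e₁ + (c − b − λ) e₂ + c e₃, P(e₃) = −a + a e₁ + (b − c) e₂ + (−c − λ) e₃ is a Rota-Baxter operator of weight λ on H_ss. -/
/-! A linear map is determined by its values on `1, e₁, e₂, e₃`, so `P` is the explicit
coordinate map `rbFamily5`. Computing both sides of the Rota-Baxter identity in coordinates,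
it becomes a polynomial identity once the denominator `a` is cleared. -/

noncomputable section

theorem QuaternionAlgebra.linearMap_apply_eq {R M : Type*} [CommRing R] [AddCommGroup M]
    [Module R M] {c₁ c₂ c₃ : R} (f : QuaternionAlgebra R c₁ c₂ c₃ →ₗ[R] M)
    (x : QuaternionAlgebra R c₁ c₂ c₃) :
    f x = x.re • f 1 + x.imI • f ⟨0, 1, 0, 0⟩ + x.imJ • f ⟨0, 0, 1, 0⟩ + x.imK • f ⟨0, 0, 0, 1⟩ := by
  have hx : x = x.re • (1 : QuaternionAlgebra R c₁ c₂ c₃) + x.imI • ⟨0, 1, 0, 0⟩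
      + x.imJ • ⟨0, 0, 1, 0⟩ + x.imK • ⟨0, 0, 0, 1⟩ := by
    ext <;> simp
  conv_lhs => rw [hx]
  simp only [map_add, map_smul]

/-- The operator of the family, in the coordinates `(re, imI, imJ, imK)` w.r.t. `1, e₁, e₂, e₃`. -/
def rbFamily5 (l a b c : ℝ) (x : Hss) : Hss :=
  ⟨-l * x.re + (-b - l) * x.imI + a * x.imJ - a * x.imK,
   b * x.imI - a * x.imJ + a * x.imK,
   (b - c) * (b + l) / a * x.imI + (c - b - l) * x.imJ + (b - c) * x.imK,
   -(c * (b + l) / a) * x.imI + c * x.imJ + (-c - l) * x.imK⟩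

theorem apply_eq_rbFamily5 {l a b c : ℝ} {P : Hss →ₗ[ℝ] Hss}
    (h0 : P 1 = (-l) • (1 : Hss))
    (h1 : P e1 = (-b - l) • (1 : Hss) + b • e1 + ((b - c) * (b + l) / a) • e2
      - (c * (b + l) / a) • e3)
    (h2 : P e2 = a • (1 : Hss) - a • e1 + (c - b - l) • e2 + c • e3)
    (h3 : P e3 = (-a) • (1 : Hss) + a • e1 + (b - c) • e2 + (-c - l) • e3) (x : Hss) :
    P x = rbFamily5 l a b c x := by
  rw [QuaternionAlgebra.linearMap_apply_eq, h0, ← e1, ← e2, ← e3, h1, h2, h3]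
  ext <;> simp [rbFamily5, e1, e2, e3] <;> ring

theorem isRotaBaxter_of_apply_eq_rbFamily5 {l a b c : ℝ} (ha : a ≠ 0) {P : Hss →ₗ[ℝ] Hss}
    (hP : ∀ x, P x = rbFamily5 l a b c x) : IsRotaBaxter l P := by
  rintro ⟨x₁, x₂, x₃, x₄⟩ ⟨y₁, y₂, y₃, y₄⟩
  simp only [hP, rbFamily5, QuaternionAlgebra.mk_mul_mk, QuaternionAlgebra.smul_mk,
    QuaternionAlgebra.mk_add_mk, QuaternionAlgebra.mk.injEq, smul_eq_mul]
  refine ⟨?_, ?_, ?_, ?_⟩ <;> (field_simp; ring)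

theorem rb_nonzero_weight_family5_general (l : ℝ) (a b c : ℝ) (ha : a ≠ 0)
    (P : Hss →ₗ[ℝ] Hss)
    (h0 : P 1 = (-l) • (1 : Hss))
    (h1 : P e1 = (-b - l) • (1 : Hss) + (b) • e1 + ((b - c)*(b + l)/a) • e2 - (c*(b + l)/a) • e3)
    (h2 : P e2 = (a) • (1 : Hss) - (a) • e1 + (c - b - l) • e2 + (c) • e3)
    (h3 : P e3 = (-a) • (1 : Hss) + (a) • e1 + (b - c) • e2 + (-c - l) • e3) :
    IsRotaBaxter l P :=
  isRotaBaxter_of_apply_eq_rbFamily5 ha (apply_eq_rbFamily5 h0 h1 h2 h3)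

theorem rb_nonzero_weight_family5 (l : ℝ) (hl : l ≠ 0) (a b c : ℝ) (ha : a ≠ 0)
    (P : Hss →ₗ[ℝ] Hss)
    (h0 : P 1 = (-l) • (1 : Hss))
    (h1 : P e1 = (-b - l) • (1 : Hss) + (b) • e1 + ((b - c)*(b + l)/a) • e2 - (c*(b + l)/a) • e3)
    (h2 : P e2 = (a) • (1 : Hss) - (a) • e1 + (c - b - l) • e2 + (c) • e3)
    (h3 : P e3 = (-a) • (1 : Hss) + (a) • e1 + (b - c) • e2 + (-c - l) • e3) :
    IsRotaBaxter l P :=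
  rb_nonzero_weight_family5_general l a b c ha P h0 h1 h2 h3
end
end

section
/- Let λ be a nonzero real number. For all real numbers a, b with b + λ ≠ 0, the ℝ-linear map P on H_ss determined on the basis by P(1) = 0, P(e₁) = −λ − λ e₁ + a e₂ + (ab/(b+λ)) e₃, P(e₂) = b e₂ + b e₃, P(e₃) = −(b+λ) e₂ − (b+λ) e₃ is a Rota-Baxter operator of weight λ on H_ss. -/
noncomputable section

/-! In coordinates, `P x` depends only on `x.imI, x.imJ, x.imK`, and its `e₃`-coordinate is that of
`e₂` with `a` replaced by `c = a b / (b + λ)`. Expanding both sides of the Rota-Baxter identity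
coordinatewise, the `1`- and `e₁`-coordinates agree identically, while the `e₂`- and
`e₃`-coordinates differ by a multiple of `c (b + λ) - a b`. -/

namespace Hss

open QuaternionAlgebra

theorem basis_expansion (x : Hss) : x = x.re • (1 : Hss) + x.imI • e1 + x.imJ • e2 + x.imK • e3 := by
  ext <;> simp [e1, e2, e3]

def rotaBaxterFamilySix (l a b c : ℝ) : Hss →ₗ[ℝ] Hss where
  toFun x := ⟨-l * x.imI, -l * x.imI, a * x.imI + b * x.imJ - (b + l) * x.imK,
    c * x.imI + b * x.imJ - (b + l) * x.imK⟩
  map_add' x y := by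
    ext <;> simp only [re_add, imI_add, imJ_add, imK_add] <;> ring
  map_smul' r x := by
    ext <;> simp only [re_smul, imI_smul, imJ_smul, imK_smul, smul_eq_mul, RingHom.id_apply] <;> ring

theorem rotaBaxterFamilySix_apply (l a b c : ℝ) (x : Hss) :
    rotaBaxterFamilySix l a b c x = ⟨-l * x.imI, -l * x.imI,
      a * x.imI + b * x.imJ - (b + l) * x.imK, c * x.imI + b * x.imJ - (b + l) * x.imK⟩ :=
  rfl

theorem isRotaBaxter_rotaBaxterFamilySix {l a b c : ℝ} (h : c * (b + l) = a * b) :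
    IsRotaBaxter l (rotaBaxterFamilySix l a b c) := by
  intro x y
  ext <;> simp only [rotaBaxterFamilySix_apply, re_add, imI_add, imJ_add, imK_add, re_smul,
    imI_smul, imJ_smul, imK_smul, smul_eq_mul, re_mul, imI_mul, imJ_mul, imK_mul]
  · ring
  · ring
  · linear_combination (x.imI * y.re + y.imI * x.re) * h
  · linear_combination (x.imI * y.re + y.imI * x.re) * h

theorem eq_rotaBaxterFamilySix {l a b c : ℝ} {P : Hss →ₗ[ℝ] Hss} (h0 : P 1 = 0)
    (h1 : P e1 = (-l) • (1 : Hss) - l • e1 + a • e2 + c • e3)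
    (h2 : P e2 = b • e2 + b • e3)
    (h3 : P e3 = (-(b + l)) • e2 - (b + l) • e3) :
    P = rotaBaxterFamilySix l a b c := by
  refine LinearMap.ext fun x => ?_
  rw [basis_expansion x]
  simp only [map_add, map_smul, h0, h1, h2, h3]
  ext <;> simp [rotaBaxterFamilySix_apply, e1, e2, e3]

end Hss

theorem rb_nonzero_weight_family6_general (l : ℝ) (a b : ℝ) (hb : b + l ≠ 0)
    (P : Hss →ₗ[ℝ] Hss)
    (h0 : P 1 = 0)
    (h1 : P e1 = (-l) • (1 : Hss) - (l) • e1 + (a) • e2 + (a*b/(b + l)) • e3)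
    (h2 : P e2 = (b) • e2 + (b) • e3)
    (h3 : P e3 = (-(b + l)) • e2 - (b + l) • e3) :
    IsRotaBaxter l P := by
  rw [Hss.eq_rotaBaxterFamilySix h0 h1 h2 h3]
  exact Hss.isRotaBaxter_rotaBaxterFamilySix (div_mul_cancel₀ _ hb)

theorem rb_nonzero_weight_family6 (l : ℝ) (hl : l ≠ 0) (a b : ℝ) (hb : b + l ≠ 0)
    (P : Hss →ₗ[ℝ] Hss)
    (h0 : P 1 = 0)
    (h1 : P e1 = (-l) • (1 : Hss) - (l) • e1 + (a) • e2 + (a*b/(b + l)) • e3)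
    (h2 : P e2 = (b) • e2 + (b) • e3)
    (h3 : P e3 = (-(b + l)) • e2 - (b + l) • e3) :
    IsRotaBaxter l P :=
  rb_nonzero_weight_family6_general l a b hb P h0 h1 h2 h3
end
end

section
/- Let λ be a nonzero real number. For all real numbers a, b with b ≠ 0, the ℝ-linear map P on H_ss determined on the basis by P(1) = −λ, P(e₁) = λ + (λ(λ+a)/b) e₂ + (λ(λ+a)/b) e₃, P(e₂) = −b − b e₁ − (2λ+a) e₂ − (λ+a) e₃, P(e₃) = b + b e₁ + (λ+a) e₂ + a e₃ is a Rota-Baxter operator of weight λ on H_ss. (Under the identification e₁ = g, e₂ = ν, e₃ = gν, this is the operator (S8) of Ma et al. on the Sweedler algebra.) -/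
noncomputable section

/-!
Both sides of the Rota–Baxter identity are bilinear in `x, y`, so once `P` is written out in
coordinates the identity becomes a polynomial identity in the coordinates of `x` and `y` and in
`λ, a, b` and `c = λ(λ+a)/b`. Its `1`- and `e₁`-components hold identically, its `e₂`- and
`e₃`-components modulo the relation `b c = λ(λ+a)`.
-/

theorem Hss.eq_basis_sum (x : Hss) : x = x.re • 1 + x.imI • e1 + x.imJ • e2 + x.imK • e3 := by
  ext <;> simp [e1, e2, e3]

theorem LinearMap.apply_eq_basis_sum (P : Hss →ₗ[ℝ] Hss) (x : Hss) :
    P x = x.re • P 1 + x.imI • P e1 + x.imJ • P e2 + x.imK • P e3 := by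
  conv_lhs => rw [x.eq_basis_sum]
  simp only [map_add, map_smul]

/-- The operator (S8) in coordinates, with `c` in place of `λ(λ+a)/b`. -/
def opS8 (l a b c : ℝ) (x : Hss) : Hss :=
  ⟨-l * x.re + l * x.imI - b * x.imJ + b * x.imK,
   -b * x.imJ + b * x.imK,
   c * x.imI - (2 * l + a) * x.imJ + (l + a) * x.imK,
   c * x.imI - (l + a) * x.imJ + a * x.imK⟩

theorem apply_eq_opS8 {l a b c : ℝ} {P : Hss →ₗ[ℝ] Hss}
    (h0 : P 1 = (-l) • (1 : Hss))
    (h1 : P e1 = l • (1 : Hss) + c • e2 + c • e3)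
    (h2 : P e2 = (-b) • (1 : Hss) - b • e1 - (2 * l + a) • e2 - (l + a) • e3)
    (h3 : P e3 = b • (1 : Hss) + b • e1 + (l + a) • e2 + a • e3) (x : Hss) :
    P x = opS8 l a b c x := by
  rw [P.apply_eq_basis_sum, h0, h1, h2, h3]
  ext <;> simp only [opS8, e1, e2, e3, QuaternionAlgebra.re_add, QuaternionAlgebra.imI_add,
    QuaternionAlgebra.imJ_add, QuaternionAlgebra.imK_add, QuaternionAlgebra.re_sub,
    QuaternionAlgebra.imI_sub, QuaternionAlgebra.imJ_sub, QuaternionAlgebra.imK_sub,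
    QuaternionAlgebra.re_smul, QuaternionAlgebra.imI_smul, QuaternionAlgebra.imJ_smul,
    QuaternionAlgebra.imK_smul, QuaternionAlgebra.re_one, QuaternionAlgebra.imI_one,
    QuaternionAlgebra.imJ_one, QuaternionAlgebra.imK_one, smul_eq_mul] <;> ring

theorem isRotaBaxter_of_eq_opS8 {l a b c : ℝ} (hbc : b * c = l * (l + a)) {P : Hss →ₗ[ℝ] Hss}
    (hP : ∀ x, P x = opS8 l a b c x) : IsRotaBaxter l P := by
  intro x y
  simp only [hP, opS8]
  ext <;> simp only [QuaternionAlgebra.re_mul, QuaternionAlgebra.imI_mul,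
    QuaternionAlgebra.imJ_mul, QuaternionAlgebra.imK_mul, QuaternionAlgebra.re_add,
    QuaternionAlgebra.imI_add, QuaternionAlgebra.imJ_add, QuaternionAlgebra.imK_add,
    QuaternionAlgebra.re_smul, QuaternionAlgebra.imI_smul, QuaternionAlgebra.imJ_smul,
    QuaternionAlgebra.imK_smul, smul_eq_mul]
  · ring
  · ring
  · linear_combination ((x.re + x.imI) * (y.imJ - y.imK) + (x.imJ - x.imK) * (y.re - y.imI)) * hbc
  · linear_combination ((x.re + x.imI) * (y.imJ - y.imK) + (x.imJ - x.imK) * (y.re - y.imI)) * hbc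

theorem rb_nonzero_weight_S8_general (l : ℝ) (a b : ℝ) (hb : b ≠ 0)
    (P : Hss →ₗ[ℝ] Hss)
    (h0 : P 1 = (-l) • (1 : Hss))
    (h1 : P e1 = (l) • (1 : Hss) + (l*(l + a)/b) • e2 + (l*(l + a)/b) • e3)
    (h2 : P e2 = (-b) • (1 : Hss) - (b) • e1 - (2*l + a) • e2 - (l + a) • e3)
    (h3 : P e3 = (b) • (1 : Hss) + (b) • e1 + (l + a) • e2 + (a) • e3) :
    IsRotaBaxter l P :=
  isRotaBaxter_of_eq_opS8 (mul_div_cancel₀ _ hb) (apply_eq_opS8 h0 h1 h2 h3)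

theorem rb_nonzero_weight_S8 (l : ℝ) (hl : l ≠ 0) (a b : ℝ) (hb : b ≠ 0)
    (P : Hss →ₗ[ℝ] Hss)
    (h0 : P 1 = (-l) • (1 : Hss))
    (h1 : P e1 = (l) • (1 : Hss) + (l*(l + a)/b) • e2 + (l*(l + a)/b) • e3)
    (h2 : P e2 = (-b) • (1 : Hss) - (b) • e1 - (2*l + a) • e2 - (l + a) • e3)
    (h3 : P e3 = (b) • (1 : Hss) + (b) • e1 + (l + a) • e2 + (a) • e3) :
    IsRotaBaxter l P :=
  rb_nonzero_weight_S8_general l a b hb P h0 h1 h2 h3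
end
end
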